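/- arXiv:1109.2200 — 3 statements merged into one kernel-verified Lean document; each statement's English description precedes it below -/
import Mathlib

section
/- Let u, v : M × [0,T) → ℝ with v a continuous viscosity supersolution of ∂ₜ f = L f + c f and u a smooth positive solution of the same linear equation, on a compact manifold M, where L is a (possibly time-dependent) linear second-order elliptic operator with smooth coefficients and c is continuous. Then inf_{x∈M} v(x,t)/u(x,t) is non-decreasing in t. -/
/-!
Let `m = inf_M v(·,s)/u(·,s)` and perturb the barrier `m·u` to `g(t)·u` with
`g(r) = m - ε e^{r-t}`, which lies strictly below `v` at time `s`. If `g·u` ever reached `v`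
before time `t`, it would touch `v` from below at a first contact point, and the viscosity
inequality there, combined with the equation for `u`, would force `g' ≥ 0`; but `g' < 0`.
Hence `(m - ε) u(·,t) ≤ v(·,t)` for every `ε > 0`.
-/

open Set Filter Topology

theorem exists_first_zero_of_pos_of_nonpos {M : Type*} [TopologicalSpace M] [CompactSpace M]
    {h : M × ℝ → ℝ} (hh : Continuous h) {s t : ℝ} (hst : s ≤ t) (hs : ∀ x, 0 < h (x, s))
    {x : M} (ht : h (x, t) ≤ 0) :
    ∃ p : M × ℝ, p.2 ∈ Ioc s t ∧ h p = 0 ∧ ∀ q : M × ℝ, q.2 ∈ Icc s p.2 → 0 ≤ h q := by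
  set K := (univ ×ˢ Icc s t) ∩ {p : M × ℝ | h p ≤ 0}
  have hK : IsCompact K :=
    (isCompact_univ.prod isCompact_Icc).inter_right (isClosed_le hh continuous_const)
  obtain ⟨p, ⟨⟨-, hps, hpt⟩, hp⟩, hmin⟩ :=
    hK.exists_isMinOn ⟨(x, t), ⟨⟨trivial, hst, le_rfl⟩, ht⟩⟩ continuous_snd.continuousOn
  have hsp : s < p.2 := hps.lt_of_ne fun hsp => (hs p.1).not_ge (by rwa [hsp])
  have hpos : ∀ q : M × ℝ, q.2 ∈ Ico s p.2 → 0 < h q := fun q ⟨hsq, hqp⟩ => by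
    by_contra! hq
    exact (hmin ⟨⟨trivial, hsq, hqp.le.trans hpt⟩, hq⟩).not_gt hqp
  have hnonneg : ∀ q : M × ℝ, q.2 ∈ Icc s p.2 → 0 ≤ h q := by
    have hcl : univ ×ˢ Icc s p.2 ⊆ {q : M × ℝ | 0 ≤ h q} := by
      rw [← closure_Ico hsp.ne, ← closure_univ, ← closure_prod_eq]
      exact closure_minimal (fun q hq => (hpos q hq.2).le) (isClosed_le continuous_const hh)
    exact fun q hq => hcl ⟨trivial, hq⟩
  exact ⟨p, ⟨hsp, hpt⟩, le_antisymm hp (hnonneg p ⟨hps, le_rfl⟩), hnonneg⟩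

section Parabolic

variable {M : Type*} [TopologicalSpace M] {Test : (M × ℝ → ℝ) → Prop}
  {L Dt : (M × ℝ → ℝ) → M × ℝ → ℝ} {c u v : M × ℝ → ℝ} {T : ℝ}

structure TimeFactorRules (Test : (M × ℝ → ℝ) → Prop) (L Dt : (M × ℝ → ℝ) → M × ℝ → ℝ) :
    Prop where
  test_mul : ∀ g : ℝ → ℝ, ContDiff ℝ 1 g → ∀ f, Test f → Test (fun p => g p.2 * f p)
  Dt_mul : ∀ g : ℝ → ℝ, ContDiff ℝ 1 g → ∀ f, Test f →
    Dt (fun p => g p.2 * f p) = fun p => deriv g p.2 * f p + g p.2 * Dt f p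
  L_mul : ∀ g : ℝ → ℝ, ContDiff ℝ 1 g → ∀ f, Test f →
    L (fun p => g p.2 * f p) = fun p => g p.2 * L f p

def IsViscositySupersolution (Test : (M × ℝ → ℝ) → Prop) (L Dt : (M × ℝ → ℝ) → M × ℝ → ℝ)
    (c : M × ℝ → ℝ) (T : ℝ) (v : M × ℝ → ℝ) : Prop :=
  ∀ φ, Test φ → ∀ p : M × ℝ, p.2 ∈ Ico 0 T → φ p = v p →
    (∀ᶠ q in 𝓝 p, q.2 ≤ p.2 → φ q ≤ v q) → L φ p + c p * φ p ≤ Dt φ p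

theorem IsViscositySupersolution.deriv_mul_nonneg_of_touch
    (hop : TimeFactorRules Test L Dt)
    (hu_test : Test u) (hv : IsViscositySupersolution Test L Dt c T v)
    {g : ℝ → ℝ} (hg : ContDiff ℝ 1 g) {p : M × ℝ} (hp : p.2 ∈ Ico 0 T)
    (hu_sol : Dt u p = L u p + c p * u p) (htouch : g p.2 * u p = v p)
    (hbelow : ∀ᶠ q in 𝓝 p, q.2 ≤ p.2 → g q.2 * u q ≤ v q) :
    0 ≤ deriv g p.2 * u p := by
  have hineq := hv _ (hop.test_mul g hg u hu_test) p hp htouch hbelow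
  rw [hop.L_mul g hg u hu_test, hop.Dt_mul g hg u hu_test] at hineq
  dsimp only at hineq
  rw [hu_sol] at hineq
  linarith

theorem IsViscositySupersolution.sub_mul_le_of_mul_le [CompactSpace M]
    (hop : TimeFactorRules Test L Dt)
    (hu_test : Test u) (hu_cont : Continuous u)
    (hu_pos : ∀ p : M × ℝ, p.2 ∈ Ico 0 T → 0 < u p)
    (hu_sol : ∀ p : M × ℝ, p.2 ∈ Ico 0 T → Dt u p = L u p + c p * u p)
    (hv_cont : Continuous v) (hv : IsViscositySupersolution Test L Dt c T v)
    {s t m : ℝ} (hs : 0 ≤ s) (hst : s ≤ t) (htT : t < T) (hm : ∀ x, m * u (x, s) ≤ v (x, s))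
    {ε : ℝ} (hε : 0 < ε) (x : M) :
    (m - ε) * u (x, t) ≤ v (x, t) := by
  by_contra! hlt
  set g : ℝ → ℝ := fun r => m - ε * Real.exp (r - t)
  have hg : ContDiff ℝ 1 g := by fun_prop
  have hg' (r : ℝ) : deriv g r = -(ε * Real.exp (r - t)) := by
    have := ((((hasDerivAt_id' r).sub_const t).exp).const_mul ε).const_sub m
    exact this.deriv.trans (by ring)
  have hh : Continuous fun q : M × ℝ => v q - g q.2 * u q := by fun_prop
  have hs_pos (y : M) : 0 < v (y, s) - g s * u (y, s) := by
    have := hm y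
    have := hu_pos (y, s) ⟨hs, hst.trans_lt htT⟩
    simp only [g]
    have : 0 < ε * Real.exp (s - t) * u (y, s) := by positivity
    linarith
  obtain ⟨p, ⟨hsp, hpt⟩, hzero, hnonneg⟩ :=
    exists_first_zero_of_pos_of_nonpos hh hst hs_pos (x := x) (by simp [g]; linarith)
  have hp : p.2 ∈ Ico 0 T := ⟨hs.trans hsp.le, hpt.trans_lt htT⟩
  have hbelow : ∀ᶠ q in 𝓝 p, q.2 ≤ p.2 → g q.2 * u q ≤ v q := by
    filter_upwards [(isOpen_Ioi.preimage continuous_snd).mem_nhds hsp] with q hsq hqp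
    linarith [hnonneg q ⟨le_of_lt hsq, hqp⟩]
  have hderiv := hv.deriv_mul_nonneg_of_touch hop hu_test hg hp
    (hu_sol p hp) (by linarith) hbelow
  rw [hg'] at hderiv
  have : 0 < ε * Real.exp (p.2 - t) * u p := by have := hu_pos p hp; positivity
  linarith

theorem IsViscositySupersolution.mul_le_of_mul_le [CompactSpace M]
    (hop : TimeFactorRules Test L Dt)
    (hu_test : Test u) (hu_cont : Continuous u)
    (hu_pos : ∀ p : M × ℝ, p.2 ∈ Ico 0 T → 0 < u p)
    (hu_sol : ∀ p : M × ℝ, p.2 ∈ Ico 0 T → Dt u p = L u p + c p * u p)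
    (hv_cont : Continuous v) (hv : IsViscositySupersolution Test L Dt c T v)
    {s t m : ℝ} (hs : 0 ≤ s) (hst : s ≤ t) (htT : t < T) (hm : ∀ x, m * u (x, s) ≤ v (x, s))
    (x : M) :
    m * u (x, t) ≤ v (x, t) := by
  have hut : 0 < u (x, t) := hu_pos (x, t) ⟨hs.trans hst, htT⟩
  refine le_of_forall_sub_le fun δ hδ => ?_
  calc m * u (x, t) - δ = (m - δ / u (x, t)) * u (x, t) := by field_simp
    _ ≤ v (x, t) := hv.sub_mul_le_of_mul_le hop hu_test hu_cont hu_pos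
        hu_sol hv_cont hs hst htT hm (div_pos hδ hut) x

end Parabolic

theorem stmt_6_general {M : Type*} [TopologicalSpace M] [CompactSpace M] [Nonempty M]
    (T : ℝ)
    (Test : (M × ℝ → ℝ) → Prop)
    (L Dt : (M × ℝ → ℝ) → M × ℝ → ℝ)
    (c : M × ℝ → ℝ)
    -- structural properties of the operators
    (hTest_mul : ∀ (g : ℝ → ℝ), ContDiff ℝ 1 g →
      ∀ f, Test f → Test (fun p => g p.2 * f p))
    (hDt_mul : ∀ (g : ℝ → ℝ), ContDiff ℝ 1 g → ∀ f, Test f →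
      Dt (fun p => g p.2 * f p) = fun p => deriv g p.2 * f p + g p.2 * Dt f p)
    (hL_mul : ∀ (g : ℝ → ℝ), ContDiff ℝ 1 g → ∀ f, Test f →
      L (fun p => g p.2 * f p) = fun p => g p.2 * L f p)
    -- u is a smooth positive classical solution
    (u : M × ℝ → ℝ) (hu_test : Test u) (hu_cont : Continuous u)
    (hu_pos : ∀ p : M × ℝ, p.2 ∈ Set.Ico (0 : ℝ) T → 0 < u p)
    (hu_sol : ∀ p : M × ℝ, p.2 ∈ Set.Ico (0 : ℝ) T → Dt u p = L u p + c p * u p)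
    -- v is a continuous viscosity supersolution
    (v : M × ℝ → ℝ) (hv_cont : Continuous v)
    (hv_super : ∀ φ, Test φ → ∀ p : M × ℝ, p.2 ∈ Set.Ico (0 : ℝ) T →
      φ p = v p →
      (∀ᶠ q in nhds p, q.2 ≤ p.2 → φ q ≤ v q) →
      L φ p + c p * φ p ≤ Dt φ p) :
    ∀ s t : ℝ, 0 ≤ s → s ≤ t → t < T →
      (⨅ x : M, v (x, s) / u (x, s)) ≤ ⨅ x : M, v (x, t) / u (x, t) := by
  intro s t hs hst htT
  have hus (x : M) : 0 < u (x, s) := hu_pos (x, s) ⟨hs, hst.trans_lt htT⟩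
  have hut (x : M) : 0 < u (x, t) := hu_pos (x, t) ⟨hs.trans hst, htT⟩
  have hbdd : BddBelow (range fun x : M => v (x, s) / u (x, s)) :=
    (isCompact_range (by fun_prop (disch := exact fun x => (hus x).ne'))).bddBelow
  refine le_ciInf fun x => (le_div_iff₀ (hut x)).mpr ?_
  exact IsViscositySupersolution.mul_le_of_mul_le ⟨hTest_mul, hDt_mul, hL_mul⟩ hu_test hu_cont hu_pos
    hu_sol hv_cont hv_super hs hst htT (fun y => (le_div_iff₀ (hus y)).mp (ciInf_le hbdd y)) x

/-- Comparison of a viscosity supersolution with a positive classical solution of a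
linear parabolic equation `∂ₜ f = L f + c f` on a compact manifold `M`:
`inf_M v(·,t)/u(·,t)` is non-decreasing in `t`.  Here the (possibly time-dependent)
second-order elliptic operator `L` and the time derivative `Dt` act on a class `Test`
of `C²` functions on space-time; `L` is linear and commutes with multiplication by
functions of time alone, `Dt` obeys the product rule for such multipliers, `u` is a
smooth (`Test`) positive classical solution, and `v` is a continuous viscosity
supersolution: every `Test` function `φ` touching `v` from below at a point
`(x₀,t₀)` (i.e. `φ = v` there and `φ ≤ v` nearby for `t ≤ t₀`) satisfies
`Dt φ ≥ L φ + c φ` at `(x₀,t₀)`. -/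
theorem stmt_6 {M : Type*} [TopologicalSpace M] [CompactSpace M] [Nonempty M]
    (T : ℝ) (hT : 0 < T)
    (Test : (M × ℝ → ℝ) → Prop)
    (L Dt : (M × ℝ → ℝ) → M × ℝ → ℝ)
    (c : M × ℝ → ℝ) (hc : Continuous c)
    -- structural properties of the operators
    (hL_lin : ∀ (a b : ℝ) (f g : M × ℝ → ℝ), Test f → Test g →
      L (fun p => a * f p + b * g p) = fun p => a * L f p + b * L g p)
    (hTest_mul : ∀ (g : ℝ → ℝ), ContDiff ℝ 1 g →
      ∀ f, Test f → Test (fun p => g p.2 * f p))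
    (hDt_mul : ∀ (g : ℝ → ℝ), ContDiff ℝ 1 g → ∀ f, Test f →
      Dt (fun p => g p.2 * f p) = fun p => deriv g p.2 * f p + g p.2 * Dt f p)
    (hL_mul : ∀ (g : ℝ → ℝ), ContDiff ℝ 1 g → ∀ f, Test f →
      L (fun p => g p.2 * f p) = fun p => g p.2 * L f p)
    -- u is a smooth positive classical solution
    (u : M × ℝ → ℝ) (hu_test : Test u) (hu_cont : Continuous u)
    (hu_pos : ∀ p : M × ℝ, p.2 ∈ Set.Ico (0 : ℝ) T → 0 < u p)
    (hu_sol : ∀ p : M × ℝ, p.2 ∈ Set.Ico (0 : ℝ) T → Dt u p = L u p + c p * u p)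
    -- v is a continuous viscosity supersolution
    (v : M × ℝ → ℝ) (hv_cont : Continuous v)
    (hv_super : ∀ φ, Test φ → ∀ p : M × ℝ, p.2 ∈ Set.Ico (0 : ℝ) T →
      φ p = v p →
      (∀ᶠ q in nhds p, q.2 ≤ p.2 → φ q ≤ v q) →
      L φ p + c p * φ p ≤ Dt φ p) :
    ∀ s t : ℝ, 0 ≤ s → s ≤ t → t < T →
      (⨅ x : M, v (x, s) / u (x, s)) ≤ ⨅ x : M, v (x, t) / u (x, t) :=
  stmt_6_general T Test L Dt c hTest_mul hDt_mul hL_mul u hu_test hu_cont hu_pos hu_sol v hv_cont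
    hv_super
end

section
/- Let M₁, M₂ be compact hypersurfaces in ℝ^{n+1} with disjoint images realizing minimal distance d > 0 at points p ∈ M₁, q ∈ M₂, with common unit normal w = (p−q)/d at both points (oriented so ν_x = ν_y = w). Then, after identifying tangent spaces via parallel translation along the segment, the second fundamental forms satisfy h^x ≤ h^y as bilinear forms. -/
/-! Along the line `t ↦ t • v`, the squared distance `φ t = ‖γ₁ (t • v) - γ₂ (t • v)‖²` has a
global minimum at `0`, so `φ'' 0 ≥ 0`. Since the two velocities agree at `0`, the first-order
term of `φ'' 0` vanishes and what remains is `2 ⟪γ₁ 0 - γ₂ 0, D²γ₁(v,v) - D²γ₂(v,v)⟫ ≥ 0`,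
which is `d (h^y(v,v) - h^x(v,v)) ≥ 0`. -/

open RealInnerProductSpace Filter Topology

theorem IsLocalMin.deriv_deriv_nonneg {f : ℝ → ℝ} {a : ℝ} (hmin : IsLocalMin f a)
    (hc : ContinuousAt f a) : 0 ≤ deriv (deriv f) a := by
  -- A negative second derivative would make `a` also a local maximum, so `f` is locally constant.
  by_contra! hneg
  have hconst : f =ᶠ[𝓝 a] fun _ => f a :=
    (hmin.and (isLocalMax_of_deriv_deriv_neg hneg hmin.deriv_eq_zero hc)).mono
      fun _ h => le_antisymm h.2 h.1
  have hflat : deriv f =ᶠ[𝓝 a] fun _ => 0 := by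
    simpa using hconst.deriv
  simp [hflat.deriv_eq] at hneg

section Curve

variable {E : Type*} [NormedAddCommGroup E] [InnerProductSpace ℝ E]

theorem IsLocalMin.inner_add_norm_sq_nonneg {u u' : ℝ → E} {b : E} {a : ℝ}
    (hu : ∀ᶠ t in 𝓝 a, HasDerivAt u (u' t) t) (hu' : HasDerivAt u' b a)
    (hmin : IsLocalMin (fun t => ‖u t‖) a) :
    0 ≤ ⟪u a, b⟫ + ‖u' a‖ ^ 2 := by
  set φ : ℝ → ℝ := fun t => ⟪u t, u t⟫
  have hφ' : deriv φ =ᶠ[𝓝 a] fun t => 2 * ⟪u t, u' t⟫ :=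
    hu.mono fun t ht => by
      simpa [φ, real_inner_comm (u' t), two_mul] using (ht.inner ℝ ht).deriv
  have hφ'' : HasDerivAt (deriv φ) (2 * (⟪u a, b⟫ + ‖u' a‖ ^ 2)) a := by
    have := ((hu.self_of_nhds.inner ℝ hu').const_mul 2).congr_of_eventuallyEq hφ'
    simpa [real_inner_self_eq_norm_sq] using this
  have hφmin : IsLocalMin φ a :=
    hmin.mono fun t ht => by
      simpa only [φ, real_inner_self_eq_norm_sq] using pow_le_pow_left₀ (norm_nonneg _) ht 2
  have hnonneg := hφmin.deriv_deriv_nonneg (hu.self_of_nhds.differentiableAt.inner ℝ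
    hu.self_of_nhds.differentiableAt).continuousAt
  rw [hφ''.deriv] at hnonneg
  linarith

end Curve

section Line

variable {E F : Type*} [NormedAddCommGroup E] [NormedSpace ℝ E]
  [NormedAddCommGroup F] [NormedSpace ℝ F]

theorem DifferentiableAt.hasDerivAt_comp_add_smul {g : E → F} {x v : E} {t : ℝ}
    (hg : DifferentiableAt ℝ g (x + t • v)) :
    HasDerivAt (fun s : ℝ => g (x + s • v)) (fderiv ℝ g (x + t • v) v) t := by
  have hline : HasDerivAt (fun s : ℝ => x + s • v) v t := by
    simpa using ((hasDerivAt_id t).smul_const v).const_add x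
  exact hg.hasFDerivAt.comp_hasDerivAt t hline

theorem ContDiffAt.hasDerivAt_fderiv_comp_add_smul {γ : E → F} {x : E}
    (hγ : ContDiffAt ℝ 2 γ x) (v : E) :
    HasDerivAt (fun s : ℝ => fderiv ℝ γ (x + s • v) v) (iteratedFDeriv ℝ 2 γ x ![v, v]) 0 := by
  have hdiff : DifferentiableAt ℝ (fderiv ℝ γ) x :=
    (hγ.fderiv_right (m := 1) le_rfl).differentiableAt one_ne_zero
  have hline := DifferentiableAt.hasDerivAt_comp_add_smul (x := x) (v := v) (t := 0)
    (by simpa using hdiff.clm_apply (differentiableAt_const v))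
  simpa [iteratedFDeriv_two_apply, fderiv_clm_apply hdiff (differentiableAt_const v)] using hline

end Line

theorem stmt_8_general {n : ℕ}
    (γ₁ γ₂ : EuclideanSpace ℝ (Fin n) → EuclideanSpace ℝ (Fin (n + 1)))
    (hγ₁ : ContDiff ℝ 2 γ₁) (hγ₂ : ContDiff ℝ 2 γ₂)
    (d : ℝ)
    (hmin : ∀ x y, d ≤ ‖γ₁ x - γ₂ y‖)
    (heq : ‖γ₁ 0 - γ₂ 0‖ = d)
    (htan : fderiv ℝ γ₁ 0 = fderiv ℝ γ₂ 0) :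
    ∀ v : EuclideanSpace ℝ (Fin n),
      -⟪iteratedFDeriv ℝ 2 γ₁ 0 ![v, v], d⁻¹ • (γ₁ 0 - γ₂ 0)⟫ ≤
      -⟪iteratedFDeriv ℝ 2 γ₂ 0 ![v, v], d⁻¹ • (γ₁ 0 - γ₂ 0)⟫ := by
  intro v
  have hcurve (γ : EuclideanSpace ℝ (Fin n) → EuclideanSpace ℝ (Fin (n + 1)))
      (hγ : ContDiff ℝ 2 γ) (t : ℝ) :
      HasDerivAt (fun s : ℝ => γ (0 + s • v)) (fderiv ℝ γ (0 + t • v) v) t :=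
    (hγ.differentiable two_ne_zero _).hasDerivAt_comp_add_smul
  have hmin_line : IsLocalMin (fun t : ℝ => ‖γ₁ (0 + t • v) - γ₂ (0 + t • v)‖) 0 :=
    Eventually.of_forall fun t => by simpa [heq] using hmin _ _
  have hsecond := hmin_line.inner_add_norm_sq_nonneg
    (Eventually.of_forall fun t => (hcurve γ₁ hγ₁ t).sub (hcurve γ₂ hγ₂ t))
    ((hγ₁.contDiffAt.hasDerivAt_fderiv_comp_add_smul v).sub
      (hγ₂.contDiffAt.hasDerivAt_fderiv_comp_add_smul v))
  simp only [zero_smul, add_zero, htan, sub_self, norm_zero] at hsecond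
  have hd : 0 ≤ d⁻¹ := inv_nonneg.mpr (heq ▸ norm_nonneg _)
  rw [inner_smul_right, inner_smul_right, neg_le_neg_iff, ← sub_nonneg, ← mul_sub,
    ← inner_sub_left, real_inner_comm]
  exact mul_nonneg hd (by simpa using hsecond)

/-- Two-point second-variation inequality: let `γ₁, γ₂` be `C²` local parametrizations
of two hypersurfaces realizing the minimal distance `d > 0` at `γ₁ 0` and `γ₂ 0`, with
tangent spaces identified (`Dγ₁(0) = Dγ₂(0)`, parallel frames), and let
`w = (γ₁ 0 − γ₂ 0)/d` be the common unit normal.  Then the second fundamental forms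
`h^x(v,v) = −⟨D²γ₁(v,v), w⟩` and `h^y(v,v) = −⟨D²γ₂(v,v), w⟩` with respect to `w`
satisfy `h^x ≤ h^y` as bilinear forms. -/
theorem stmt_8 {n : ℕ}
    (γ₁ γ₂ : EuclideanSpace ℝ (Fin n) → EuclideanSpace ℝ (Fin (n + 1)))
    (hγ₁ : ContDiff ℝ 2 γ₁) (hγ₂ : ContDiff ℝ 2 γ₂)
    (d : ℝ) (hd : 0 < d)
    (hmin : ∀ x y, d ≤ ‖γ₁ x - γ₂ y‖)
    (heq : ‖γ₁ 0 - γ₂ 0‖ = d)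
    (htan : fderiv ℝ γ₁ 0 = fderiv ℝ γ₂ 0) :
    ∀ v : EuclideanSpace ℝ (Fin n),
      -⟪iteratedFDeriv ℝ 2 γ₁ 0 ![v, v], d⁻¹ • (γ₁ 0 - γ₂ 0)⟫ ≤
      -⟪iteratedFDeriv ℝ 2 γ₂ 0 ![v, v], d⁻¹ • (γ₁ 0 - γ₂ 0)⟫ :=
  stmt_8_general γ₁ γ₂ hγ₁ hγ₂ d hmin heq htan
end

section
/- Let X : M → ℝ^{n+1} be a smooth embedding of a compact n-manifold with outward unit normal ν, and define Z(x,y) = 2⟨X(x)−X(y), ν(x)⟩ / ‖X(x)−X(y)‖² for x ≠ y. Then as y → x along a geodesic with initial direction v ∈ TₓM, ‖v‖ = 1, Z(x,y) converges to h_x(v,v), the second fundamental form evaluated at (v,v). -/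
open RealInnerProductSpace

/-!
Write `c s = p + s v + (s²/2) a + o(s²)` with `v = c'(0)` and `a = c''(0) = -h ν`. Since `v ⟂ ν`,
the normal component of the chord is `⟪p - c s, ν⟫ = (h/2) s² + o(s²)`, while the chord length
satisfies `‖p - c s‖² = ‖v‖² s² + o(s²) = s² + o(s²)`; the quotient tends to `h`.
-/

open Filter Topology

theorem tendsto_div_sq_of_hasDerivAt {f f' : ℝ → ℝ} {k : ℝ}
    (hf : ∀ᶠ x in 𝓝 0, HasDerivAt f (f' x) x) (hf0 : f 0 = 0) (hf'0 : f' 0 = 0)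
    (hf' : HasDerivAt f' k 0) :
    Tendsto (fun s => f s / s ^ 2) (𝓝[≠] 0) (𝓝 (k / 2)) := by
  have hslope : Tendsto (fun s => f' s / s) (𝓝[≠] 0) (𝓝 k) := by
    refine (hasDerivAt_iff_tendsto_slope.mp hf').congr fun s => ?_
    simp [slope, hf'0, div_eq_inv_mul]
  refine HasDerivAt.lhopital_zero_nhdsNE (f' := f') (g' := fun s => 2 * s)
    (eventually_nhdsWithin_of_eventually_nhds hf) ?_ ?_ ?_ ?_ ?_
  · exact Eventually.of_forall fun s => by simpa using hasDerivAt_pow 2 s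
  · filter_upwards [self_mem_nhdsWithin] with s hs
    exact mul_ne_zero two_ne_zero hs
  · simpa [hf0] using hf.self_of_nhds.continuousAt.tendsto.mono_left nhdsWithin_le_nhds
  · simpa using ((continuous_pow 2).tendsto (0 : ℝ)).mono_left nhdsWithin_le_nhds
  · simpa [mul_comm, div_div] using hslope.div_const 2

theorem tendsto_norm_sub_sq_div_sq {E : Type*} [NormedAddCommGroup E] [NormedSpace ℝ E]
    {c : ℝ → E} {v : E} (hc : HasDerivAt c v 0) :
    Tendsto (fun s => ‖c s - c 0‖ ^ 2 / s ^ 2) (𝓝[≠] 0) (𝓝 (‖v‖ ^ 2)) := by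
  refine ((hasDerivAt_iff_tendsto_slope.mp hc).norm.pow 2).congr fun s => ?_
  rw [slope_def_module, norm_smul, mul_pow, sub_zero, norm_inv, Real.norm_eq_abs, inv_pow,
    sq_abs, inv_mul_eq_div]

theorem tendsto_inner_sub_div_sq {E : Type*} [NormedAddCommGroup E] [InnerProductSpace ℝ E]
    {c c' : ℝ → E} {a w : E} (hc : ∀ᶠ x in 𝓝 0, HasDerivAt c (c' x) x)
    (hc' : HasDerivAt c' a 0) (horth : ⟪c' 0, w⟫ = 0) :
    Tendsto (fun s => ⟪c s - c 0, w⟫ / s ^ 2) (𝓝[≠] 0) (𝓝 (⟪a, w⟫ / 2)) := by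
  refine tendsto_div_sq_of_hasDerivAt (f' := fun x => ⟪c' x, w⟫) ?_ (by simp) horth
    (by simpa using hc'.inner ℝ (hasDerivAt_const 0 w))
  filter_upwards [hc] with x hx
  simpa using (hx.sub_const (c 0)).inner ℝ (hasDerivAt_const x w)

/-- The geodesic condition is encoded as `c''(0) = -h • ν` with `h = h_x(v,v)`, `v = c'(0)`. -/
theorem stmt_9 {n : ℕ} (ν : EuclideanSpace ℝ (Fin (n + 1))) (hν : ‖ν‖ = 1)
    (c : ℝ → EuclideanSpace ℝ (Fin (n + 1))) (hc : ContDiff ℝ 2 c)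
    (p : EuclideanSpace ℝ (Fin (n + 1))) (hp : c 0 = p)
    (hunit : ‖deriv c 0‖ = 1) (htan : ⟪deriv c 0, ν⟫ = 0)
    (h : ℝ) (hgeo : deriv (deriv c) 0 = (-h) • ν) :
    Filter.Tendsto (fun s : ℝ => 2 * ⟪p - c s, ν⟫ / ‖p - c s‖ ^ 2)
      (nhdsWithin 0 {0}ᶜ) (nhds h) := by
  subst hp
  have hc1 : ∀ s, HasDerivAt c (deriv c s) s :=
    fun s => (hc.differentiable two_ne_zero s).hasDerivAt
  have hc2 : HasDerivAt (deriv c) (deriv (deriv c) 0) 0 :=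
    (hc.differentiable_deriv_two 0).hasDerivAt
  have hnormal := tendsto_inner_sub_div_sq (Eventually.of_forall hc1) hc2 htan
  have hchord := tendsto_norm_sub_sq_div_sq (hc1 0)
  rw [hgeo, real_inner_smul_left, real_inner_self_eq_norm_sq, hν] at hnormal
  rw [hunit, one_pow] at hchord
  convert ((hnormal.const_mul (-2)).div hchord one_ne_zero).congr' ?_ using 2
  · ring
  filter_upwards [self_mem_nhdsWithin] with s (hs : s ≠ 0)
  rw [Pi.div_apply, ← neg_sub, inner_neg_left, norm_neg]
  field_simp
end
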